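/- Neither Q(8) × Z/2Z nor the central product of D₈ with Z/4Z (presented as ⟨a, c, x ∣ a⁴ = x² = 1, a² = c², ac = ca, cx = xc, xax = a⁻¹⟩) has a proper subgroup with abelianization isomorphic to (Z/2Z)³. -/

import Mathlib

/-!
A proper subgroup `H` of a group of order 16 whose abelianization has order 8 has order 8 itself,
so its commutator subgroup is trivial and `H ≅ (ℤ/2)³`: all its elements satisfy `h² = 1`.
In `Q₈ × ℤ/2` only four elements satisfy `g² = 1`. In the central product exactly eight do, so
they would have to form `H`; but `x` and `ac` square to `1` while `(xac)² = a² ≠ 1`.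
The presented group is identified with an explicit model through the normal form `aⁱ cʲ xᵏ`.
-/

/-- Relators for the central product of D₈ and Z/4Z,
⟨a, c, x ∣ a⁴ = x² = 1, a² = c², ac = ca, cx = xc, xax = a⁻¹⟩,
with a = 0, c = 1, x = 2. -/
def CPRels : Set (FreeGroup (Fin 3)) :=
  {(FreeGroup.of 0) ^ 4, (FreeGroup.of 2) ^ 2,
   (FreeGroup.of 0) ^ 2 * ((FreeGroup.of 1) ^ 2)⁻¹,
   FreeGroup.of 0 * FreeGroup.of 1 * (FreeGroup.of 0)⁻¹ * (FreeGroup.of 1)⁻¹,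
   FreeGroup.of 1 * FreeGroup.of 2 * (FreeGroup.of 1)⁻¹ * (FreeGroup.of 2)⁻¹,
   FreeGroup.of 2 * FreeGroup.of 0 * FreeGroup.of 2 * FreeGroup.of 0}

theorem mul_mul_of_mul_eq {M : Type*} [Semigroup M] {u v w : M} (h : u * v = w) (y : M) :
    u * (v * y) = w * y := by
  rw [← mul_assoc, h]

theorem ZMod.eq_zero_or_eq_one (z : ZMod 2) : z = 0 ∨ z = 1 := by
  decide +revert

section Abelianization

variable {G : Type*} [Group G] [Finite G]

theorem Subgroup.commutator_eq_bot_of_card_eq_two_mul {H : Subgroup G} (hH : H ≠ ⊤)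
    (hG : Nat.card G = 2 * Nat.card (Abelianization H)) : _root_.commutator H = ⊥ := by
  have hsplit := Subgroup.card_eq_card_quotient_mul_card_subgroup (_root_.commutator H)
  have hindex := H.card_mul_index
  have hpos : 0 < Nat.card (Abelianization H) := Nat.card_pos
  have htwo : 2 ≤ H.index := H.one_lt_index_of_ne_top hH
  have hone : Nat.card (_root_.commutator H) * H.index = 2 := by
    change Nat.card H = Nat.card (Abelianization H) * _ at hsplit
    rw [hsplit, hG, mul_assoc, mul_comm 2] at hindex
    exact Nat.eq_of_mul_eq_mul_left hpos hindex
  have : Nat.card (_root_.commutator H) = 1 := by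
    have := Nat.card_pos (α := _root_.commutator H)
    nlinarith
  exact Subgroup.eq_bot_of_card_eq _ this

theorem Subgroup.nonempty_mulEquiv_of_abelianization_mulEquiv {A : Type*} [Group A]
    {H : Subgroup G} (hH : H ≠ ⊤) (f : Abelianization H ≃* A)
    (hG : Nat.card G = 2 * Nat.card A) : Nonempty (H ≃* A) := by
  rw [← Nat.card_congr f.toEquiv] at hG
  have hinj : Function.Injective (Abelianization.of : H →* Abelianization H) := by
    rw [← MonoidHom.ker_eq_bot_iff, Abelianization.ker_of,
      H.commutator_eq_bot_of_card_eq_two_mul hH hG]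
  exact ⟨(MulEquiv.ofBijective _ ⟨hinj, QuotientGroup.mk_surjective⟩).trans f⟩

theorem Subgroup.card_le_ncard_of_forall_sq_eq_one {H : Subgroup G} (hH : ∀ h ∈ H, h ^ 2 = 1) :
    Nat.card H ≤ {g : G | g ^ 2 = 1}.ncard :=
  (Nat.card_coe_set_eq (H : Set G)).trans_le (Set.ncard_le_ncard hH (Set.toFinite _))

theorem not_nonempty_abelianization_mulEquiv_of_card_eq_sixteen (hG : Nat.card G = 16)
    (hK : ∀ K : Subgroup G, (∀ k ∈ K, k ^ 2 = 1) → Nat.card K < 8) (H : Subgroup G)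
    (hH : H ≠ ⊤) :
    ¬ Nonempty (Abelianization H ≃* Multiplicative (ZMod 2 × ZMod 2 × ZMod 2)) := by
  rintro ⟨f⟩
  have hA : Nat.card (Multiplicative (ZMod 2 × ZMod 2 × ZMod 2)) = 8 := by
    rw [Nat.card_eq_fintype_card]
    rfl
  obtain ⟨e⟩ := H.nonempty_mulEquiv_of_abelianization_mulEquiv hH f (by rw [hG, hA])
  have hexp : ∀ y : Multiplicative (ZMod 2 × ZMod 2 × ZMod 2), y ^ 2 = 1 := by decide
  have hsq : ∀ h ∈ H, h ^ 2 = 1 := fun h hh =>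
    congrArg Subtype.val (e.injective (by rw [map_pow, map_one, hexp]) : (⟨h, hh⟩ : H) ^ 2 = 1)
  exact (hK H hsq).ne ((Nat.card_congr e.toEquiv).trans hA)

end Abelianization

theorem QuaternionGroup.ncard_prod_sq_eq_one :
    {g : QuaternionGroup 2 × Multiplicative (ZMod 2) | g ^ 2 = 1}.ncard = 4 := by
  rw [← Nat.card_coe_set_eq, Nat.card_eq_fintype_card]
  decide

namespace CentralProduct

/-- `⟨i, j, k⟩` stands for `a ^ i * c ^ j * x ^ k`; the product is computed with
`x a = a⁻¹ x`, `c a = a c`, `c x = x c` and `c ^ 2 = a ^ 2`. -/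
structure Model where
  i : ZMod 4
  j : ZMod 2
  k : ZMod 2
deriving DecidableEq, Fintype

namespace Model

instance : Mul Model :=
  ⟨fun g h => ⟨g.i + (if g.k = 1 then -h.i else h.i) + (if g.j = 1 ∧ h.j = 1 then 2 else 0),
    g.j + h.j, g.k + h.k⟩⟩

instance : One Model := ⟨⟨0, 0, 0⟩⟩

instance : Inv Model := ⟨fun g => g * g * g⟩

set_option maxHeartbeats 2000000 in
protected theorem mul_assoc : ∀ f g h : Model, f * g * h = f * (g * h) := by
  decide

instance : Group Model where
  mul_assoc := Model.mul_assoc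
  one_mul := by decide
  mul_one := by decide
  inv_mul_cancel := by decide

theorem mul_def (g h : Model) : g * h =
    ⟨g.i + (if g.k = 1 then -h.i else h.i) + (if g.j = 1 ∧ h.j = 1 then 2 else 0),
     g.j + h.j, g.k + h.k⟩ :=
  rfl

theorem card_eq_sixteen : Nat.card Model = 16 := by
  rw [Nat.card_eq_fintype_card]
  rfl

theorem ncard_sq_eq_one : {g : Model | g ^ 2 = 1}.ncard = 8 := by
  rw [← Nat.card_coe_set_eq, Nat.card_eq_fintype_card]
  decide

theorem card_lt_eight_of_forall_sq_eq_one (H : Subgroup Model) (hH : ∀ h ∈ H, h ^ 2 = 1) :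
    Nat.card H < 8 := by
  by_contra! hcard
  have hHS : (H : Set Model) = {g | g ^ 2 = 1} :=
    Set.eq_of_subset_of_ncard_le hH (ncard_sq_eq_one.trans_le hcard) (Set.toFinite _)
  have hmem : ∀ g : Model, g ^ 2 = 1 → g ∈ H := fun g hg => hHS.symm.subset hg
  have hxac := hH _ (mul_mem (hmem ⟨0, 0, 1⟩ (by decide)) (hmem ⟨1, 1, 0⟩ (by decide)))
  revert hxac
  decide

end Model

local notation "CP" => PresentedGroup CPRels

def a : CP := PresentedGroup.of 0
def c : CP := PresentedGroup.of 1
def x : CP := PresentedGroup.of 2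

theorem a_pow_four : a ^ 4 = 1 := by
  rw [a, PresentedGroup.of, ← map_pow]
  exact PresentedGroup.one_of_mem (by simp [CPRels])

theorem x_sq : x ^ 2 = 1 := by
  rw [x, PresentedGroup.of, ← map_pow]
  exact PresentedGroup.one_of_mem (by simp [CPRels])

theorem c_sq : c ^ 2 = a ^ 2 := by
  rw [a, c, PresentedGroup.of, PresentedGroup.of, ← map_pow, ← map_pow]
  exact (PresentedGroup.mk_eq_mk_of_mul_inv_mem (by simp [CPRels])).symm

theorem commute_a_c : Commute a c := by
  rw [Commute, SemiconjBy, a, c, PresentedGroup.of, PresentedGroup.of, ← map_mul, ← map_mul]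
  exact PresentedGroup.mk_eq_mk_of_mul_inv_mem (by simp [CPRels, mul_assoc])

theorem commute_c_x : Commute c x := by
  rw [Commute, SemiconjBy, c, x, PresentedGroup.of, PresentedGroup.of, ← map_mul, ← map_mul]
  exact PresentedGroup.mk_eq_mk_of_mul_inv_mem (by simp [CPRels, mul_assoc])

theorem x_mul_a : x * a = a⁻¹ * x := by
  have h : x * a * (x * a) = 1 := by
    rw [← mul_assoc, x, a, PresentedGroup.of, PresentedGroup.of, ← map_mul, ← map_mul,
      ← map_mul]
    exact PresentedGroup.one_of_mem (by simp [CPRels])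
  have hx : x⁻¹ = x := inv_eq_of_mul_eq_one_right (by rw [← pow_two, x_sq])
  rw [mul_eq_one_iff_eq_inv.1 h, mul_inv_rev, hx]

theorem a_pow_mul_a_pow (i i' : ZMod 4) : a ^ i.val * a ^ i'.val = a ^ (i + i').val := by
  rw [← pow_add, ZMod.val_add, ← pow_eq_pow_mod _ a_pow_four]

theorem a_pow_neg (i : ZMod 4) : a ^ (-i).val = (a ^ i.val)⁻¹ :=
  eq_inv_of_mul_eq_one_left (by rw [a_pow_mul_a_pow, neg_add_cancel, ZMod.val_zero, pow_zero])

theorem x_pow_mul_x_pow (k k' : ZMod 2) : x ^ k.val * x ^ k'.val = x ^ (k + k').val := by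
  rw [← pow_add, ZMod.val_add, ← pow_eq_pow_mod _ x_sq]

theorem c_pow_mul_c_pow (j j' : ZMod 2) :
    c ^ j.val * c ^ j'.val =
      a ^ (if j = 1 ∧ j' = 1 then 2 else 0 : ZMod 4).val * c ^ (j + j').val := by
  obtain rfl | rfl := ZMod.eq_zero_or_eq_one j <;> obtain rfl | rfl := ZMod.eq_zero_or_eq_one j' <;>
    simp [ZMod.val_one, ← pow_two, c_sq, show (2 : ZMod 4).val = 2 from rfl,
      show (1 + 1 : ZMod 2).val = 0 from rfl]

theorem c_pow_mul_a_pow (j : ZMod 2) (i : ZMod 4) :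
    c ^ j.val * a ^ i.val = a ^ i.val * c ^ j.val :=
  (commute_a_c.pow_pow _ _).symm.eq

theorem x_pow_mul_c_pow (k j : ZMod 2) : x ^ k.val * c ^ j.val = c ^ j.val * x ^ k.val :=
  (commute_c_x.pow_pow _ _).symm.eq

theorem x_pow_mul_a_pow (k : ZMod 2) (i : ZMod 4) :
    x ^ k.val * a ^ i.val = a ^ (if k = 1 then -i else i).val * x ^ k.val := by
  obtain rfl | rfl := ZMod.eq_zero_or_eq_one k
  · simp
  · have h : SemiconjBy x (a ^ i.val) (a⁻¹ ^ i.val) := SemiconjBy.pow_right x_mul_a _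
    simp [ZMod.val_one, h.eq, a_pow_neg, inv_pow]

def normalForm (g : Model) : CP :=
  a ^ g.i.val * c ^ g.j.val * x ^ g.k.val

theorem normalForm_mul (g h : Model) : normalForm (g * h) = normalForm g * normalForm h := by
  simp only [normalForm, Model.mul_def, mul_assoc, x_pow_mul_x_pow,
    mul_mul_of_mul_eq (x_pow_mul_a_pow _ _), mul_mul_of_mul_eq (c_pow_mul_a_pow _ _),
    mul_mul_of_mul_eq (x_pow_mul_c_pow _ _), mul_mul_of_mul_eq (a_pow_mul_a_pow _ _),
    mul_mul_of_mul_eq (c_pow_mul_c_pow _ _)]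
  rw [add_assoc]

def ofModel : Model →* CP :=
  MonoidHom.mk' normalForm normalForm_mul

def generator : Fin 3 → Model :=
  ![⟨1, 0, 0⟩, ⟨0, 1, 0⟩, ⟨0, 0, 1⟩]

theorem generator_rels : ∀ r ∈ CPRels, FreeGroup.lift generator r = 1 := by
  simp only [CPRels, Set.mem_insert_iff, Set.mem_singleton_iff]
  rintro r (rfl | rfl | rfl | rfl | rfl | rfl) <;>
    simp only [map_pow, map_mul, map_inv, FreeGroup.lift_apply_of] <;> decide

def toModel : CP →* Model :=
  PresentedGroup.toGroup generator_rels

theorem toModel_ofModel (g : Model) : toModel (ofModel g) = g := by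
  have hgen : ∀ n, toModel (PresentedGroup.of n) = generator n := fun _ =>
    PresentedGroup.toGroup.of _
  simp only [ofModel, MonoidHom.mk'_apply, normalForm, map_mul, map_pow, a, c, x, hgen]
  revert g
  decide

theorem ofModel_toModel : ofModel.comp toModel = MonoidHom.id CP := by
  refine PresentedGroup.ext fun n => ?_
  rw [MonoidHom.comp_apply, toModel, PresentedGroup.toGroup.of]
  fin_cases n <;> simp [ofModel, normalForm, generator, a, c, x, ZMod.val_one,
    show (1 : ZMod 4).val = 1 from rfl]

def modelEquiv : Model ≃* CP :=
  MonoidHom.toMulEquiv ofModel toModel (MonoidHom.ext toModel_ofModel) ofModel_toModel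

instance : Finite CP :=
  Finite.of_equiv _ modelEquiv.toEquiv

theorem card_eq_sixteen : Nat.card CP = 16 :=
  (Nat.card_congr modelEquiv.toEquiv).symm.trans Model.card_eq_sixteen

theorem card_lt_eight_of_forall_sq_eq_one (H : Subgroup CP) (hH : ∀ h ∈ H, h ^ 2 = 1) :
    Nat.card H < 8 := by
  have hmap := Model.card_lt_eight_of_forall_sq_eq_one (H.map modelEquiv.symm.toMonoidHom)
    (by rintro _ ⟨h, hh, rfl⟩; rw [← map_pow, hH h hh, map_one])
  rwa [Subgroup.card_map_of_injective (f := modelEquiv.symm.toMonoidHom) modelEquiv.symm.injective]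
    at hmap

end CentralProduct

/-- Neither Q(8) × Z/2Z nor the central product of D₈ with Z/4Z has a proper
subgroup with abelianization isomorphic to (Z/2Z)³. -/
theorem stmt14 :
    (∀ H : Subgroup (QuaternionGroup 2 × Multiplicative (ZMod 2)), H ≠ ⊤ →
      ¬ Nonempty (Abelianization H ≃*
          Multiplicative (ZMod 2 × ZMod 2 × ZMod 2))) ∧
    (∀ H : Subgroup (PresentedGroup CPRels), H ≠ ⊤ →
      ¬ Nonempty (Abelianization H ≃*
          Multiplicative (ZMod 2 × ZMod 2 × ZMod 2))) := by
  refine ⟨not_nonempty_abelianization_mulEquiv_of_card_eq_sixteen ?_ ?_,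
    not_nonempty_abelianization_mulEquiv_of_card_eq_sixteen CentralProduct.card_eq_sixteen
      CentralProduct.card_lt_eight_of_forall_sq_eq_one⟩
  · rw [Nat.card_eq_fintype_card]
    rfl
  · intro K hK
    have := K.card_le_ncard_of_forall_sq_eq_one hK
    rw [QuaternionGroup.ncard_prod_sq_eq_one] at this
    omega
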